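/- Let d ≥ 3, γ ∈ [−2, 0], and f ≥ 0 with ∫ f dv = 1 and ∫ f|v|² dv = d. For each unit vector e and v ∈ ℝ^d define a*_{f,γ,e}(v) = C(d,γ)∫ f(w)|v−w|^{2+γ}(Π(v−w)e,e) dw, where Π(z) = I − z⊗z/|z|² is the projection orthogonal to z. Then for v ≠ 0 and e = v/|v|, one has a*_{f,γ,e}(v) ≤ C·(1+|v|²)^{γ/2} for a constant C depending only on d, γ, and the mass and second moment of f. Consequently inf_e a*_{f,γ,e}(v) ≤ C⟨v⟩^γ. -/

import Mathlib

/-! Write `e = v/‖v‖` and `z = v - w`. The integrand is `‖z‖^γ (‖z‖² - ⟪z, e⟫²)`, and since `v`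
lies on the line `ℝ e`, the second factor is the squared distance from `w` to that line, hence at
most `‖w‖²`. Away from the ball of radius `⟨v⟩/2` around `v` this gives the bound
`(⟨v⟩/2)^γ ‖w‖²`; inside the ball the integrand is at most `‖z‖^{2+γ} ≤ (⟨v⟩/2)^{2+γ}` and
`⟨v⟩ ≲ 1 + ‖w‖` there. Either way it is `≲ ⟨v⟩^γ (1 + ‖w‖²)`, which integrates against `f` to
`⟨v⟩^γ (1 + d)` by the mass and second-moment normalization. -/

open MeasureTheory Metric

/-- The directional Landau coefficient
`a*_{f,γ,e}(v) = ∫ f(w)‖v-w‖^{2+γ}(Π(v-w)e,e) dw`, where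
`(Π(z)e,e) = 1 - ⟪z,e⟫²/‖z‖²` is the projection orthogonal to `z` evaluated at `e`
(normalization constant omitted). -/
noncomputable def aStarDir (d : ℕ) (γ : ℝ) (f : EuclideanSpace ℝ (Fin d) → ℝ)
    (e v : EuclideanSpace ℝ (Fin d)) : ℝ :=
  ∫ w, f w * ‖v - w‖ ^ (2 + γ) *
    (1 - (inner ℝ (v - w) e : ℝ) ^ 2 / ‖v - w‖ ^ 2)

open scoped RealInnerProductSpace

section Kernel

variable {E : Type*} [NormedAddCommGroup E] [InnerProductSpace ℝ E]

noncomputable def landauKernelDir (γ : ℝ) (z e : E) : ℝ :=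
  ‖z‖ ^ (2 + γ) * (1 - ⟪z, e⟫ ^ 2 / ‖z‖ ^ 2)

theorem real_inner_sq_le_norm_sq {e : E} (he : ‖e‖ ≤ 1) (z : E) : ⟪z, e⟫ ^ 2 ≤ ‖z‖ ^ 2 := by
  have hcs : |⟪z, e⟫| ≤ ‖z‖ :=
    (abs_real_inner_le_norm z e).trans (mul_le_of_le_one_right (norm_nonneg z) he)
  simpa only [sq_abs] using pow_le_pow_left₀ (abs_nonneg _) hcs 2

theorem one_sub_inner_sq_div_mem_Icc {e : E} (he : ‖e‖ ≤ 1) (z : E) :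
    1 - ⟪z, e⟫ ^ 2 / ‖z‖ ^ 2 ∈ Set.Icc (0 : ℝ) 1 := by
  constructor
  · rw [sub_nonneg]
    exact div_le_one_of_le₀ (real_inner_sq_le_norm_sq he z) (by positivity)
  · rw [sub_le_self_iff]
    positivity

theorem landauKernelDir_nonneg (γ : ℝ) {e : E} (he : ‖e‖ ≤ 1) (z : E) :
    0 ≤ landauKernelDir γ z e :=
  mul_nonneg (by positivity) (one_sub_inner_sq_div_mem_Icc he z).1

theorem landauKernelDir_le_rpow (γ : ℝ) {e : E} (he : ‖e‖ ≤ 1) (z : E) :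
    landauKernelDir γ z e ≤ ‖z‖ ^ (2 + γ) :=
  mul_le_of_le_one_right (by positivity) (one_sub_inner_sq_div_mem_Icc he z).2

theorem landauKernelDir_eq_rpow_mul (γ : ℝ) {z : E} (hz : z ≠ 0) (e : E) :
    landauKernelDir γ z e = ‖z‖ ^ γ * (‖z‖ ^ 2 - ⟪z, e⟫ ^ 2) := by
  have hz' : 0 < ‖z‖ := norm_pos_iff.mpr hz
  rw [landauKernelDir, add_comm, Real.rpow_add hz', Real.rpow_two]
  field_simp

theorem norm_sq_sub_inner_sq_le {e : E} (he : ‖e‖ = 1) (c : ℝ) (w : E) :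
    ‖c • e - w‖ ^ 2 - ⟪c • e - w, e⟫ ^ 2 ≤ ‖w‖ ^ 2 := by
  have hee : ⟪e, e⟫ = 1 := by rw [real_inner_self_eq_norm_sq, he, one_pow]
  rw [norm_sub_sq_real, inner_sub_left, real_inner_smul_left, real_inner_smul_left, hee,
    norm_smul, Real.norm_eq_abs, he, mul_one, mul_one, sq_abs, real_inner_comm w e]
  nlinarith [sq_nonneg ⟪w, e⟫]

theorem landauKernelDir_sub_le {γ ρ : ℝ} (hγ₁ : -2 ≤ γ) (hγ₂ : γ ≤ 0) {e : E} (he : ‖e‖ = 1)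
    (c : ℝ) (w : E) (hρ : 0 < ρ) (hρc : 2 * ρ ≤ 1 + ‖c • e‖) :
    landauKernelDir γ (c • e - w) e ≤ 2 * ρ ^ γ * (1 + ‖w‖ ^ 2) := by
  set z := c • e - w
  have hργ : 0 ≤ ρ ^ γ := by positivity
  rcases lt_or_ge ‖z‖ ρ with hnear | hfar
  · have hρw : ρ ≤ 1 + ‖w‖ := by
      have := norm_le_norm_add_norm_sub' (c • e) w
      linarith
    calc landauKernelDir γ z e ≤ ‖z‖ ^ (2 + γ) := landauKernelDir_le_rpow γ he.le z
      _ ≤ ρ ^ (2 + γ) := by gcongr; linarith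
      _ = ρ ^ γ * ρ ^ 2 := by rw [add_comm, Real.rpow_add hρ, Real.rpow_two]
      _ ≤ ρ ^ γ * (2 * (1 + ‖w‖ ^ 2)) := by
        gcongr
        nlinarith [sq_nonneg (1 - ‖w‖), norm_nonneg w]
      _ = 2 * ρ ^ γ * (1 + ‖w‖ ^ 2) := by ring
  · have hz : z ≠ 0 := norm_pos_iff.mp (hρ.trans_le hfar)
    calc landauKernelDir γ z e = ‖z‖ ^ γ * (‖z‖ ^ 2 - ⟪z, e⟫ ^ 2) :=
          landauKernelDir_eq_rpow_mul γ hz e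
      _ ≤ ρ ^ γ * ‖w‖ ^ 2 :=
        mul_le_mul (Real.rpow_le_rpow_of_nonpos hρ hfar hγ₂) (norm_sq_sub_inner_sq_le he c w)
          (sub_nonneg.mpr (real_inner_sq_le_norm_sq he.le z)) hργ
      _ ≤ 2 * ρ ^ γ * (1 + ‖w‖ ^ 2) := by nlinarith [sq_nonneg ‖w‖]

theorem landauKernelDir_sub_le_radial {γ : ℝ} (hγ₁ : -2 ≤ γ) (hγ₂ : γ ≤ 0) {v : E} (hv : v ≠ 0)
    (w : E) :
    landauKernelDir γ (v - w) (‖v‖⁻¹ • v) ≤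
      2 ^ (1 - γ) * (1 + ‖v‖ ^ 2) ^ (γ / 2) * (1 + ‖w‖ ^ 2) := by
  have he : ‖‖v‖⁻¹ • v‖ = 1 := norm_smul_inv_norm hv
  have hv_eq : ‖v‖ • ‖v‖⁻¹ • v = v := smul_inv_smul₀ (norm_ne_zero_iff.mpr hv) v
  have hbracket : √(1 + ‖v‖ ^ 2) ≤ 1 + ‖v‖ :=
    Real.sqrt_le_iff.mpr ⟨by positivity, by nlinarith [norm_nonneg v]⟩
  have hρ : 0 < √(1 + ‖v‖ ^ 2) / 2 := by positivity
  have hρpow : 2 * (√(1 + ‖v‖ ^ 2) / 2) ^ γ = 2 ^ (1 - γ) * (1 + ‖v‖ ^ 2) ^ (γ / 2) := by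
    rw [Real.div_rpow (Real.sqrt_nonneg _) zero_le_two, Real.sqrt_eq_rpow,
      ← Real.rpow_mul (by positivity), sub_eq_add_neg, Real.rpow_add two_pos, Real.rpow_one,
      Real.rpow_neg zero_le_two]
    ring_nf
  simpa only [hv_eq, hρpow] using landauKernelDir_sub_le hγ₁ hγ₂ he ‖v‖ w hρ
    (by rwa [hv_eq, mul_div_cancel₀ _ two_ne_zero])

end Kernel

theorem integral_mul_le_mul_moments {E : Type*} [NormedAddCommGroup E] [MeasurableSpace E]
    {μ : Measure E} {f K : E → ℝ} {A : ℝ} (hf : ∀ w, 0 ≤ f w) (hK : ∀ w, 0 ≤ K w)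
    (hKA : ∀ w, K w ≤ A * (1 + ‖w‖ ^ 2)) (hfi : Integrable f μ)
    (hfi₂ : Integrable (fun w => f w * ‖w‖ ^ 2) μ) :
    ∫ w, f w * K w ∂μ ≤ A * ((∫ w, f w ∂μ) + ∫ w, f w * ‖w‖ ^ 2 ∂μ) := by
  calc ∫ w, f w * K w ∂μ ≤ ∫ w, A * (f w + f w * ‖w‖ ^ 2) ∂μ := by
        refine integral_mono_of_nonneg (.of_forall fun w => mul_nonneg (hf w) (hK w))
          ((hfi.add hfi₂).const_mul A) (.of_forall fun w => ?_)
        calc f w * K w ≤ f w * (A * (1 + ‖w‖ ^ 2)) := mul_le_mul_of_nonneg_left (hKA w) (hf w)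
          _ = A * (f w + f w * ‖w‖ ^ 2) := by ring
    _ = A * ((∫ w, f w ∂μ) + ∫ w, f w * ‖w‖ ^ 2 ∂μ) := by
        rw [integral_const_mul, integral_add hfi hfi₂]

theorem aStarDir_eq_integral_landauKernelDir (d : ℕ) (γ : ℝ) (f : EuclideanSpace ℝ (Fin d) → ℝ)
    (e v : EuclideanSpace ℝ (Fin d)) :
    aStarDir d γ f e v = ∫ w, f w * landauKernelDir γ (v - w) e := by
  simp only [aStarDir, landauKernelDir, mul_assoc]

theorem aStarDir_nonneg {d : ℕ} (γ : ℝ) {f : EuclideanSpace ℝ (Fin d) → ℝ} (hf : ∀ w, 0 ≤ f w)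
    {e : EuclideanSpace ℝ (Fin d)} (he : ‖e‖ = 1) (v : EuclideanSpace ℝ (Fin d)) :
    0 ≤ aStarDir d γ f e v := by
  rw [aStarDir_eq_integral_landauKernelDir]
  exact integral_nonneg fun w => mul_nonneg (hf w) (landauKernelDir_nonneg γ he.le _)

theorem aStar_radial_direction_upper_bound_general (d : ℕ) (γ : ℝ)
    (hγ₁ : -2 ≤ γ) (hγ₂ : γ ≤ 0) :
    ∃ C : ℝ, 0 < C ∧
      ∀ f : EuclideanSpace ℝ (Fin d) → ℝ,
        (∀ v, 0 ≤ f v) → Integrable f → (∫ v, f v) = 1 →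
        Integrable (fun v => f v * ‖v‖ ^ 2) → (∫ v, f v * ‖v‖ ^ 2) = d →
        ∀ v : EuclideanSpace ℝ (Fin d), v ≠ 0 →
          aStarDir d γ f (‖v‖⁻¹ • v) v ≤ C * (1 + ‖v‖ ^ 2) ^ (γ / 2) ∧
          sInf {x : ℝ | ∃ e : EuclideanSpace ℝ (Fin d), ‖e‖ = 1 ∧ x = aStarDir d γ f e v} ≤
            C * (1 + ‖v‖ ^ 2) ^ (γ / 2) := by
  refine ⟨2 ^ (1 - γ) * (1 + d), by positivity, fun f hf hfi hm hfi₂ hm₂ v hv => ?_⟩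
  have he : ‖‖v‖⁻¹ • v‖ = 1 := norm_smul_inv_norm hv
  have hradial : aStarDir d γ f (‖v‖⁻¹ • v) v ≤ 2 ^ (1 - γ) * (1 + d) * (1 + ‖v‖ ^ 2) ^ (γ / 2) :=
    calc aStarDir d γ f (‖v‖⁻¹ • v) v
        ≤ 2 ^ (1 - γ) * (1 + ‖v‖ ^ 2) ^ (γ / 2) * ((∫ w, f w) + ∫ w, f w * ‖w‖ ^ 2) := by
          rw [aStarDir_eq_integral_landauKernelDir]
          exact integral_mul_le_mul_moments hf (fun w => landauKernelDir_nonneg γ he.le _)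
            (landauKernelDir_sub_le_radial hγ₁ hγ₂ hv) hfi hfi₂
      _ = 2 ^ (1 - γ) * (1 + d) * (1 + ‖v‖ ^ 2) ^ (γ / 2) := by rw [hm, hm₂]; ring
  refine ⟨hradial, csInf_le_of_le ⟨0, ?_⟩ ⟨_, he, rfl⟩ hradial⟩
  rintro x ⟨e, he, rfl⟩
  exact aStarDir_nonneg γ hf he v

/-- For `d ≥ 3`, `γ ∈ [-2,0]`, `f ≥ 0` with unit mass and second moment `d`:
for `v ≠ 0` and `e = v/‖v‖` one has `a*_{f,γ,e}(v) ≤ C ⟨v⟩^γ`, with `C = C(d,γ)`;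
consequently `inf_{‖e‖=1} a*_{f,γ,e}(v) ≤ C ⟨v⟩^γ`. -/
theorem aStar_radial_direction_upper_bound (d : ℕ) (hd : 3 ≤ d) (γ : ℝ)
    (hγ₁ : -2 ≤ γ) (hγ₂ : γ ≤ 0) :
    ∃ C : ℝ, 0 < C ∧
      ∀ f : EuclideanSpace ℝ (Fin d) → ℝ,
        (∀ v, 0 ≤ f v) → Integrable f → (∫ v, f v) = 1 →
        Integrable (fun v => f v * ‖v‖ ^ 2) → (∫ v, f v * ‖v‖ ^ 2) = d →
        ∀ v : EuclideanSpace ℝ (Fin d), v ≠ 0 →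
          aStarDir d γ f (‖v‖⁻¹ • v) v ≤ C * (1 + ‖v‖ ^ 2) ^ (γ / 2) ∧
          sInf {x : ℝ | ∃ e : EuclideanSpace ℝ (Fin d), ‖e‖ = 1 ∧ x = aStarDir d γ f e v} ≤
            C * (1 + ‖v‖ ^ 2) ^ (γ / 2) :=
  aStar_radial_direction_upper_bound_general d γ hγ₁ hγ₂
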